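/- arXiv:1209.3075 — 3 statements merged into one kernel-verified Lean document; each statement's English description precedes it below -/
import Mathlib

section
/- Let r ≥ 1 be an integer, let c > 0 be a real number, and let s be a real number with s > c. Then there exists a positive integer N such that the function on (0,∞)^r given by (t_1,…,t_r) ↦ (∏_{i=1}^r (t_i + t_i⁻¹)^c) · (∏_{i=1}^r t_i)^s · (∏_{i=1}^{r-1} (1 + t_i/t_{i+1})^{-N}) · (1 + t_r)^{-N} is integrable with respect to the product measure ∏_{i=1}^r dt_i/t_i; in particular the corresponding integral over (0,∞)^r is finite. -/
open MeasureTheory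

/-- The multiplicative Haar measure `dt/t` on `(0,∞)`, as a Borel measure on `ℝ`. -/
noncomputable def mulHaarPos : Measure ℝ :=
  (volume.restrict (Set.Ioi (0 : ℝ))).withDensity fun t => ENNReal.ofReal t⁻¹

/-- Extension of a vector `x ∈ ℝ^r` to a function on `ℕ` (by `1` outside `{0,…,r-1}`),
used to write products indexed by natural numbers. -/
noncomputable def ext1 {r : ℕ} (x : Fin r → ℝ) (i : ℕ) : ℝ :=
  if h : i < r then x ⟨i, h⟩ else 1

lemma one_var_integrable {c s : ℝ} (hc : 0 < c) (hs : c < s) {M : ℕ} (hM : c + s < M) :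
    Integrable (fun t : ℝ => (t + t⁻¹) ^ c * t ^ s * (1 + t) ^ (-(M : ℝ))) mulHaarPos := by
  have hmeas : Measurable fun t : ℝ =>
      (t + t⁻¹) ^ c * t ^ s * (1 + t) ^ (-(M : ℝ)) * t⁻¹ := by fun_prop
  rw [mulHaarPos, integrable_withDensity_iff (by fun_prop)
    (Filter.Eventually.of_forall fun x => ENNReal.ofReal_lt_top)]
  have key : IntegrableOn
      (fun t : ℝ => (t + t⁻¹) ^ c * t ^ s * (1 + t) ^ (-(M : ℝ)) * t⁻¹) (Set.Ioi 0) := by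
    rw [← Set.Ioc_union_Ioi_eq_Ioi (zero_le_one (α := ℝ))]
    apply IntegrableOn.union
    · -- on (0,1]
      have hb : IntegrableOn (fun t : ℝ => 2 ^ c * t ^ (s - c - 1)) (Set.Ioc (0:ℝ) 1) :=
        ((intervalIntegral.intervalIntegrable_rpow' (by linarith)).1).const_mul _
      refine Integrable.mono' hb hmeas.aestronglyMeasurable ?_
      rw [ae_restrict_iff' measurableSet_Ioc]
      refine Filter.Eventually.of_forall fun t ht => ?_
      obtain ⟨ht0, ht1⟩ := ht
      have hinv : t ≤ t⁻¹ := by nlinarith [mul_inv_cancel₀ (ne_of_gt ht0)]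
      have hM0 : (-(M:ℝ)) ≤ 0 := neg_nonpos.mpr (Nat.cast_nonneg M)
      calc ‖(t + t⁻¹) ^ c * t ^ s * (1 + t) ^ (-(M : ℝ)) * t⁻¹‖
          = (t + t⁻¹) ^ c * t ^ s * (1 + t) ^ (-(M : ℝ)) * t⁻¹ := by
            rw [Real.norm_eq_abs, abs_of_nonneg]; positivity
        _ ≤ (2 * t⁻¹) ^ c * t ^ s * 1 * t⁻¹ := by
            gcongr
            · linarith
            · exact Real.rpow_le_one_of_one_le_of_nonpos (by linarith) hM0
        _ = 2 ^ c * t ^ (s - c - 1) := by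
            rw [Real.mul_rpow (by norm_num) (by positivity), Real.inv_rpow ht0.le,
              ← Real.rpow_neg ht0.le, ← Real.rpow_neg_one t, mul_one, mul_assoc, mul_assoc,
              ← Real.rpow_add ht0, ← Real.rpow_add ht0]
            ring_nf
    · -- on (1,∞)
      have hb : IntegrableOn (fun t : ℝ => 2 ^ c * t ^ (c + s - M - 1)) (Set.Ioi (1:ℝ)) :=
        (integrableOn_Ioi_rpow_of_lt (by linarith) one_pos).const_mul _
      refine Integrable.mono' hb hmeas.aestronglyMeasurable ?_
      rw [ae_restrict_iff' measurableSet_Ioi]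
      refine Filter.Eventually.of_forall fun t ht => ?_
      have ht1 : (1:ℝ) < t := ht
      have ht0 : (0:ℝ) < t := lt_trans one_pos ht1
      have hinv : t⁻¹ ≤ t := by nlinarith [mul_inv_cancel₀ (ne_of_gt ht0)]
      have hM0 : (-(M:ℝ)) ≤ 0 := neg_nonpos.mpr (Nat.cast_nonneg M)
      calc ‖(t + t⁻¹) ^ c * t ^ s * (1 + t) ^ (-(M : ℝ)) * t⁻¹‖
          = (t + t⁻¹) ^ c * t ^ s * (1 + t) ^ (-(M : ℝ)) * t⁻¹ := by
            rw [Real.norm_eq_abs, abs_of_nonneg]; positivity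
        _ ≤ (2 * t) ^ c * t ^ s * (1 + t) ^ (-(M:ℝ)) * t⁻¹ := by
            gcongr
            linarith
        _ ≤ (2 * t) ^ c * t ^ s * t ^ (-(M:ℝ)) * t⁻¹ := by
            have h := Real.rpow_le_rpow_of_nonpos ht0 (by linarith : t ≤ 1 + t) hM0
            exact mul_le_mul_of_nonneg_right
              (mul_le_mul_of_nonneg_left h (by positivity)) (by positivity)
        _ = 2 ^ c * t ^ (c + s - M - 1) := by
            rw [Real.mul_rpow (by norm_num) ht0.le, ← Real.rpow_neg_one t, mul_assoc, mul_assoc,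
              mul_assoc, ← Real.rpow_add ht0, ← Real.rpow_add ht0, ← Real.rpow_add ht0]
            ring_nf
  refine key.congr ?_
  filter_upwards [ae_restrict_mem measurableSet_Ioi] with t ht
  rw [ENNReal.toReal_ofReal (le_of_lt (inv_pos.mpr ht))]

lemma one_le_finset_prod_aux {ι : Type*} (s : Finset ι) (f : ι → ℝ) (h : ∀ i ∈ s, 1 ≤ f i) :
    (1:ℝ) ≤ ∏ i ∈ s, f i := by
  calc (1:ℝ) = ∏ _i ∈ s, (1:ℝ) := by simp
    _ ≤ ∏ i ∈ s, f i := Finset.prod_le_prod (by norm_num) h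

lemma basic_ineq {a b : ℝ} (ha : 0 < a) (hb : 0 < b) : 1 + a ≤ (1 + a / b) * (1 + b) := by
  have h : a / b * b = a := div_mul_cancel₀ a hb.ne'
  nlinarith [div_pos ha hb]

lemma tele (m : ℕ) (y : ℕ → ℝ) (hy : ∀ i, 0 < y i) :
    ∀ d i, i + d = m →
      1 + y i ≤ (∏ k ∈ Finset.Ico i m, (1 + y k / y (k + 1))) * (1 + y m) := by
  intro d
  induction d with
  | zero =>
    intro i hi
    simp only [Nat.add_zero] at hi
    subst hi
    simp
  | succ d ih =>
    intro i hi
    have him : i < m := by omega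
    rw [Finset.prod_eq_prod_Ico_succ_bot him]
    calc 1 + y i ≤ (1 + y i / y (i + 1)) * (1 + y (i + 1)) := basic_ineq (hy i) (hy (i + 1))
      _ ≤ (1 + y i / y (i + 1)) *
          ((∏ k ∈ Finset.Ico (i + 1) m, (1 + y k / y (k + 1))) * (1 + y m)) := by
          refine mul_le_mul_of_nonneg_left (ih (i + 1) (by omega)) ?_
          have := div_pos (hy i) (hy (i + 1))
          linarith
      _ = (1 + y i / y (i + 1)) *
          (∏ k ∈ Finset.Ico (i + 1) m, (1 + y k / y (k + 1))) * (1 + y m) := by ring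

lemma coupling {r : ℕ} (hr : 1 ≤ r) (M : ℕ) (x : Fin r → ℝ) (hx : ∀ i, 0 < x i) :
    (∏ i ∈ Finset.range (r - 1), (1 + ext1 x i / ext1 x (i + 1)) ^ (-((r * M : ℕ) : ℝ))) *
      (1 + ext1 x (r - 1)) ^ (-((r * M : ℕ) : ℝ)) ≤ ∏ i, (1 + x i) ^ (-(M : ℝ)) := by
  set y : ℕ → ℝ := ext1 x with hy_def
  have hy : ∀ i, 0 < y i := by
    intro i
    rw [hy_def]
    unfold ext1
    split
    · exact hx _
    · exact one_pos
  have hfac : ∀ k, (1 : ℝ) ≤ 1 + y k / y (k + 1) := fun k =>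
    le_add_of_nonneg_right (div_pos (hy k) (hy (k + 1))).le
  set P : ℝ := (∏ i ∈ Finset.range (r - 1), (1 + y i / y (i + 1))) * (1 + y (r - 1)) with hP_def
  have hprod1 : (1 : ℝ) ≤ ∏ i ∈ Finset.range (r - 1), (1 + y i / y (i + 1)) :=
    one_le_finset_prod_aux _ _ fun k _ => hfac k
  have hP1 : 1 ≤ P := by
    rw [hP_def]
    have := hy (r - 1)
    nlinarith
  have hPpos : (0 : ℝ) < P := lt_of_lt_of_le one_pos hP1
  have hkey : ∀ i : Fin r, 1 + x i ≤ P := by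
    intro i
    have hile : (i : ℕ) ≤ r - 1 := by omega
    have h1 : 1 + y i ≤ (∏ k ∈ Finset.Ico (i : ℕ) (r - 1), (1 + y k / y (k + 1))) *
        (1 + y (r - 1)) := tele (r - 1) y hy (r - 1 - i) i (by omega)
    have h2 : y (i : ℕ) = x i := by
      rw [hy_def]; unfold ext1; rw [dif_pos i.isLt]
    have h3 : (∏ k ∈ Finset.Ico (i : ℕ) (r - 1), (1 + y k / y (k + 1))) * (1 + y (r - 1)) ≤ P := by
      rw [hP_def, Finset.range_eq_Ico,
        ← Finset.prod_Ico_consecutive _ (Nat.zero_le (i : ℕ)) hile]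
      have hA : (1 : ℝ) ≤ ∏ k ∈ Finset.Ico 0 (i : ℕ), (1 + y k / y (k + 1)) :=
        one_le_finset_prod_aux _ _ fun k _ => hfac k
      have hB : (0 : ℝ) ≤ (∏ k ∈ Finset.Ico (i : ℕ) (r - 1), (1 + y k / y (k + 1))) *
          (1 + y (r - 1)) := by
        have h1' := hy (r - 1)
        have : (0:ℝ) ≤ ∏ k ∈ Finset.Ico (i : ℕ) (r - 1), (1 + y k / y (k + 1)) :=
          le_trans zero_le_one (one_le_finset_prod_aux _ _ fun k _ => hfac k)
        nlinarith
      calc (∏ k ∈ Finset.Ico (i : ℕ) (r - 1), (1 + y k / y (k + 1))) * (1 + y (r - 1))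
          = 1 * ((∏ k ∈ Finset.Ico (i : ℕ) (r - 1), (1 + y k / y (k + 1))) * (1 + y (r - 1))) := by
            ring
        _ ≤ (∏ k ∈ Finset.Ico 0 (i : ℕ), (1 + y k / y (k + 1))) *
            ((∏ k ∈ Finset.Ico (i : ℕ) (r - 1), (1 + y k / y (k + 1))) * (1 + y (r - 1))) :=
            mul_le_mul_of_nonneg_right hA hB
        _ = (∏ k ∈ Finset.Ico 0 (i : ℕ), (1 + y k / y (k + 1))) *
            (∏ k ∈ Finset.Ico (i : ℕ) (r - 1), (1 + y k / y (k + 1))) * (1 + y (r - 1)) := by ring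
    rw [← h2]
    exact le_trans h1 h3
  set Q : ℝ := ∏ i, (1 + x i) with hQ_def
  have hQ1 : 1 ≤ Q := one_le_finset_prod_aux _ _ fun i _ => by linarith [hx i]
  have hQpos : (0 : ℝ) < Q := lt_of_lt_of_le one_pos hQ1
  have hQP : Q ≤ P ^ r := by
    rw [hQ_def]
    calc ∏ i, (1 + x i) ≤ ∏ _i : Fin r, P :=
        Finset.prod_le_prod (fun i _ => by linarith [hx i]) (fun i _ => hkey i)
      _ = P ^ r := by rw [Finset.prod_const, Finset.card_univ, Fintype.card_fin]
  have hL : (∏ i ∈ Finset.range (r - 1), (1 + y i / y (i + 1)) ^ (-((r * M : ℕ) : ℝ))) *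
      (1 + y (r - 1)) ^ (-((r * M : ℕ) : ℝ)) = P ^ (-((r * M : ℕ) : ℝ)) := by
    rw [Real.finset_prod_rpow _ _ (fun k _ => by linarith [hfac k]) _,
      ← Real.mul_rpow (by linarith) (by linarith [hy (r - 1)])]
  have hR : (∏ i, (1 + x i) ^ (-(M : ℝ))) = Q ^ (-(M : ℝ)) := by
    rw [hQ_def, Real.finset_prod_rpow _ _ (fun i _ => by linarith [hx i]) _]
  rw [hR]
  calc (∏ i ∈ Finset.range (r - 1), (1 + y i / y (i + 1)) ^ (-((r * M : ℕ) : ℝ))) *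
      (1 + y (r - 1)) ^ (-((r * M : ℕ) : ℝ)) = P ^ (-((r * M : ℕ) : ℝ)) := hL
    _ ≤ Q ^ (-(M : ℝ)) := by
        rw [Real.rpow_neg hPpos.le, Real.rpow_neg hQpos.le]
        apply inv_anti₀ (Real.rpow_pos_of_pos hQpos _)
        calc Q ^ (M : ℝ) ≤ (P ^ r) ^ (M : ℝ) :=
            Real.rpow_le_rpow hQpos.le hQP (Nat.cast_nonneg M)
          _ = P ^ ((r * M : ℕ) : ℝ) := by
            rw [← Real.rpow_natCast P r, ← Real.rpow_mul hPpos.le]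
            push_cast
            ring_nf

/-- Case `d_𝕂 = 1` of the convergence lemma: for `r ≥ 1`, `c > 0` and `s > c`, there is a
positive integer `N` such that
`t ↦ (∏ i (t i + t i⁻¹)^c) (∏ i t i)^s (∏_{i<r-1} (1 + t i / t (i+1)))^{-N} (1 + t (r-1))^{-N}`
is integrable on `(0,∞)^r` for the measure `∏ dt_i / t_i`. -/
theorem stmt0 (r : ℕ) (hr : 1 ≤ r) (c s : ℝ) (hc : 0 < c) (hs : c < s) :
    ∃ N : ℕ, 0 < N ∧
      Integrable
        (fun x : Fin r → ℝ =>
          (∏ i, (x i + (x i)⁻¹) ^ c) * (∏ i, x i) ^ s *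
          (∏ i ∈ Finset.range (r - 1),
            (1 + ext1 x i / ext1 x (i + 1)) ^ (-(N : ℝ))) *
          (1 + ext1 x (r - 1)) ^ (-(N : ℝ)))
        (Measure.pi fun _ : Fin r => mulHaarPos) := by
  set M : ℕ := ⌈c + s⌉₊ + 1 with hMdef
  have hM : c + s < M := by
    have h1 : c + s ≤ (⌈c + s⌉₊ : ℝ) := Nat.le_ceil _
    have h2 : ((⌈c + s⌉₊ : ℕ) : ℝ) < ((⌈c + s⌉₊ + 1 : ℕ) : ℝ) := by exact_mod_cast Nat.lt_succ_self _
    calc c + s ≤ (⌈c + s⌉₊ : ℝ) := h1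
      _ < ((⌈c + s⌉₊ + 1 : ℕ) : ℝ) := h2
  refine ⟨r * M, Nat.mul_pos hr (Nat.succ_pos _), ?_⟩
  haveI : SigmaFinite mulHaarPos := by unfold mulHaarPos; infer_instance
  have hf := one_var_integrable hc hs hM
  have hprod : Integrable
      (fun x : Fin r → ℝ => ∏ i, ((x i + (x i)⁻¹) ^ c * (x i) ^ s * (1 + x i) ^ (-(M : ℝ))))
      (Measure.pi fun _ : Fin r => mulHaarPos) := by
    letI : MeasureSpace ℝ := ⟨mulHaarPos⟩
    exact Integrable.fin_nat_prod (𝕜 := ℝ) (fun i => hf)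
  have hext : ∀ i : ℕ, Measurable fun x : Fin r → ℝ => ext1 x i := by
    intro i
    by_cases h : i < r
    · simp only [ext1, dif_pos h]
      exact measurable_pi_apply _
    · simp only [ext1, dif_neg h]
      exact measurable_const
  have mr : ∀ e : ℝ, Measurable fun y : ℝ => y ^ e := fun e => by fun_prop
  refine hprod.mono' ?_ ?_
  · apply Measurable.aestronglyMeasurable
    have m1 : Measurable fun x : Fin r → ℝ => ∏ i, (x i + (x i)⁻¹) ^ c :=
      Finset.measurable_prod _ fun i _ =>
        (mr c).comp ((measurable_pi_apply i).add (measurable_pi_apply i).inv)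
    have m2 : Measurable fun x : Fin r → ℝ => (∏ i, x i) ^ s :=
      (mr s).comp (Finset.measurable_prod _ fun i _ => measurable_pi_apply i)
    have m3 : Measurable fun x : Fin r → ℝ =>
        ∏ i ∈ Finset.range (r - 1), (1 + ext1 x i / ext1 x (i + 1)) ^ (-((r * M : ℕ) : ℝ)) :=
      Finset.measurable_prod _ fun i _ =>
        (mr _).comp (measurable_const.add ((hext i).div (hext (i + 1))))
    have m4 : Measurable fun x : Fin r → ℝ => (1 + ext1 x (r - 1)) ^ (-((r * M : ℕ) : ℝ)) :=
      (mr _).comp (measurable_const.add (hext (r - 1)))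
    exact ((m1.mul m2).mul m3).mul m4
  · have h1 : ∀ᵐ t ∂mulHaarPos, 0 < t := by
      have : mulHaarPos ≪ volume.restrict (Set.Ioi (0:ℝ)) := by
        rw [mulHaarPos]; exact withDensity_absolutelyContinuous _ _
      exact this.ae_le (ae_restrict_mem measurableSet_Ioi)
    have hae : ∀ᵐ x ∂(Measure.pi fun _ : Fin r => mulHaarPos), ∀ i, 0 < x i :=
      Filter.Eventually.filter_mono (Measure.ae_pi_le_pi)
        (Filter.eventually_pi fun i => h1)
    filter_upwards [hae] with x hx
    have hx0 : ∀ i, (0:ℝ) ≤ x i := fun i => (hx i).le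
    have hyext : ∀ i, 0 < ext1 x i := by
      intro i
      unfold ext1
      split
      · exact hx _
      · exact one_pos
    have hA : ∀ i, (0:ℝ) ≤ (x i + (x i)⁻¹) ^ c := fun i =>
      Real.rpow_nonneg (by have := hx i; positivity) _
    have hprodA : (0:ℝ) ≤ ∏ i, (x i + (x i)⁻¹) ^ c :=
      Finset.prod_nonneg fun i _ => hA i
    have hS : (0:ℝ) ≤ (∏ i, x i) ^ s :=
      Real.rpow_nonneg (Finset.prod_nonneg fun i _ => hx0 i) _
    have hC1 : (0:ℝ) ≤ ∏ i ∈ Finset.range (r - 1),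
        (1 + ext1 x i / ext1 x (i + 1)) ^ (-((r * M : ℕ) : ℝ)) :=
      Finset.prod_nonneg fun i _ => Real.rpow_nonneg
        (by have h1 := hyext i; have h2 := hyext (i+1); positivity) _
    have hC2 : (0:ℝ) ≤ (1 + ext1 x (r - 1)) ^ (-((r * M : ℕ) : ℝ)) :=
      Real.rpow_nonneg (by have := hyext (r - 1); positivity) _
    have hnn : (0:ℝ) ≤ (∏ i, (x i + (x i)⁻¹) ^ c) * (∏ i, x i) ^ s *
        (∏ i ∈ Finset.range (r - 1), (1 + ext1 x i / ext1 x (i + 1)) ^ (-((r * M : ℕ) : ℝ))) *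
        (1 + ext1 x (r - 1)) ^ (-((r * M : ℕ) : ℝ)) := by positivity
    rw [Real.norm_eq_abs, abs_of_nonneg hnn]
    have e1 : (∏ i, x i) ^ s = ∏ i, (x i) ^ s :=
      (Real.finset_prod_rpow _ _ (fun i _ => hx0 i) s).symm
    have hcoup := coupling hr M x hx
    calc (∏ i, (x i + (x i)⁻¹) ^ c) * (∏ i, x i) ^ s *
        (∏ i ∈ Finset.range (r - 1), (1 + ext1 x i / ext1 x (i + 1)) ^ (-((r * M : ℕ) : ℝ))) *
        (1 + ext1 x (r - 1)) ^ (-((r * M : ℕ) : ℝ))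
        = ((∏ i, (x i + (x i)⁻¹) ^ c) * (∏ i, (x i) ^ s)) *
          ((∏ i ∈ Finset.range (r - 1), (1 + ext1 x i / ext1 x (i + 1)) ^ (-((r * M : ℕ) : ℝ))) *
            (1 + ext1 x (r - 1)) ^ (-((r * M : ℕ) : ℝ))) := by
          rw [e1]; ring
      _ ≤ ((∏ i, (x i + (x i)⁻¹) ^ c) * (∏ i, (x i) ^ s)) *
          (∏ i, (1 + x i) ^ (-(M : ℝ))) := by
          refine mul_le_mul_of_nonneg_left hcoup ?_
          exact mul_nonneg hprodA (Finset.prod_nonneg fun i _ => Real.rpow_nonneg (hx0 i) _)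
      _ = ∏ i, ((x i + (x i)⁻¹) ^ c * (x i) ^ s * (1 + x i) ^ (-(M : ℝ))) := by
          rw [← Finset.prod_mul_distrib, ← Finset.prod_mul_distrib]
end

section
/- Let r ≥ 1 be an integer and let α_1, …, α_r be positive real numbers. For i = 1, …, r set t_i := ∏_{j=i}^{r} α_j. Then ∏_{i=1}^{r} (t_i + t_i⁻¹) ≤ ∏_{j=1}^{r} (α_j + α_j⁻¹)^j. -/
lemma key {a b : ℝ} (ha : 0 < a) (hb : 0 < b) :
    a * b + (a * b)⁻¹ ≤ (a + a⁻¹) * (b + b⁻¹) := by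
  have h : 0 ≤ a / b + b / a := by positivity
  have : (a + a⁻¹) * (b + b⁻¹) = a * b + (a * b)⁻¹ + (a / b + b / a) := by
    field_simp; ring
  linarith

lemma prod_add_inv {ι : Type*} [DecidableEq ι] (s : Finset ι) (hs : s.Nonempty)
    (f : ι → ℝ) (hf : ∀ i ∈ s, 0 < f i) :
    (∏ i ∈ s, f i) + (∏ i ∈ s, f i)⁻¹ ≤ ∏ i ∈ s, (f i + (f i)⁻¹) := by
  induction hs using Finset.Nonempty.cons_induction with
  | singleton a => simp
  | cons a s ha hs ih =>
    rw [Finset.prod_cons, Finset.prod_cons]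
    have hpos : 0 < ∏ i ∈ s, f i := Finset.prod_pos (fun i hi => hf i (Finset.mem_cons_of_mem hi))
    calc f a * ∏ i ∈ s, f i + (f a * ∏ i ∈ s, f i)⁻¹
        ≤ (f a + (f a)⁻¹) * ((∏ i ∈ s, f i) + (∏ i ∈ s, f i)⁻¹) :=
          key (hf a (Finset.mem_cons_self a s)) hpos
      _ ≤ (f a + (f a)⁻¹) * ∏ i ∈ s, (f i + (f i)⁻¹) := by
          have := hf a (Finset.mem_cons_self a s)
          apply mul_le_mul_of_nonneg_left (ih fun i hi => hf i (Finset.mem_cons_of_mem hi))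
          positivity

/-- For `r ≥ 1` and positive reals `α_1, …, α_r`, setting `t_i := ∏_{j ≥ i} α_j`,
one has `∏_i (t_i + t_i⁻¹) ≤ ∏_j (α_j + α_j⁻¹)^j` (the exponent being the
1-based index of `j`). -/
theorem stmt3 (r : ℕ) (hr : 1 ≤ r) (α : Fin r → ℝ) (hα : ∀ i, 0 < α i) :
    ∏ i : Fin r,
        ((∏ j ∈ Finset.Ici i, α j) + (∏ j ∈ Finset.Ici i, α j)⁻¹) ≤
      ∏ j : Fin r, (α j + (α j)⁻¹) ^ ((j : ℕ) + 1) := by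
  calc ∏ i : Fin r, ((∏ j ∈ Finset.Ici i, α j) + (∏ j ∈ Finset.Ici i, α j)⁻¹)
      ≤ ∏ i : Fin r, ∏ j ∈ Finset.Ici i, (α j + (α j)⁻¹) := by
        apply Finset.prod_le_prod
        · intro i _
          have := hα i
          have : 0 < ∏ j ∈ Finset.Ici i, α j := Finset.prod_pos fun j _ => hα j
          positivity
        · intro i _
          exact prod_add_inv _ ⟨i, Finset.mem_Ici.2 le_rfl⟩ _ fun j _ => hα j
    _ = ∏ j : Fin r, (α j + (α j)⁻¹) ^ ((j : ℕ) + 1) := by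
        rw [Finset.prod_comm' (s' := fun j => Finset.Iic j) (t' := Finset.univ)
          (fun i j => by simp)]
        apply Finset.prod_congr rfl
        intro j _
        rw [Finset.prod_const, Fin.card_Iic]
end

section
/- Let r ≥ 1 be an integer, let e_1, …, e_r denote the standard basis of ℝ^r, and consider the subgroups P₁ := {g ∈ GL_r(ℝ) : g e_r = e_r} and P₂ := {h ∈ GL_r(ℝ) : h e_i = e_i for i = 1, …, r−1} of GL_r(ℝ). Then the multiplication map P₁ × P₂ → GL_r(ℝ), (g, h) ↦ gh, is injective, its image equals the set of A ∈ GL_r(ℝ) such that the last coordinate of A⁻¹ e_r is nonzero (equivalently, the (r−1)×(r−1) top-left minor of A is invertible), this image is open in GL_r(ℝ), and its complement in GL_r(ℝ) is a null set for any Haar measure on GL_r(ℝ). -/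
open Matrix MeasureTheory Topology

/-- Borel σ-algebra on `GL_r(ℝ)` (for its topology as a group of units of the
topological ring of matrices). -/
noncomputable instance GLReal.measurableSpace (r : ℕ) :
    MeasurableSpace (GL (Fin r) ℝ) := borel _

instance GLReal.borelSpace (r : ℕ) : BorelSpace (GL (Fin r) ℝ) := ⟨rfl⟩

/-! ### Auxiliary topological instances -/

instance matSC (r : ℕ) : SecondCountableTopology (Matrix (Fin r) (Fin r) ℝ) :=
  inferInstanceAs (SecondCountableTopology (Fin r → Fin r → ℝ))

instance matLC (r : ℕ) : LocallyCompactSpace (Matrix (Fin r) (Fin r) ℝ) :=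
  inferInstanceAs (LocallyCompactSpace (Fin r → Fin r → ℝ))

instance mopSC {M : Type*} [TopologicalSpace M] [SecondCountableTopology M] :
    SecondCountableTopology Mᵐᵒᵖ :=
  MulOpposite.opHomeomorph.symm.isEmbedding.secondCountableTopology

instance mopLC {M : Type*} [TopologicalSpace M] [LocallyCompactSpace M] :
    LocallyCompactSpace Mᵐᵒᵖ :=
  MulOpposite.opHomeomorph.symm.isClosedEmbedding.locallyCompactSpace

instance GLsc (r : ℕ) : SecondCountableTopology (GL (Fin r) ℝ) :=
  (Units.isEmbedding_embedProduct).secondCountableTopology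

theorem GLclosedEmbedding (r : ℕ) :
    IsClosedEmbedding (Units.embedProduct (Matrix (Fin r) (Fin r) ℝ)) := by
  refine ⟨Units.isEmbedding_embedProduct, ?_⟩
  have : Set.range (Units.embedProduct (Matrix (Fin r) (Fin r) ℝ)) =
      {p : Matrix (Fin r) (Fin r) ℝ × (Matrix (Fin r) (Fin r) ℝ)ᵐᵒᵖ |
        p.1 * p.2.unop = 1 ∧ p.2.unop * p.1 = 1} := by
    ext p
    constructor
    · rintro ⟨u, rfl⟩
      exact ⟨u.mul_inv, u.inv_mul⟩
    · rintro ⟨h1, h2⟩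
      exact ⟨⟨p.1, p.2.unop, h1, h2⟩, rfl⟩
  rw [this]
  have hc : Continuous fun p : Matrix (Fin r) (Fin r) ℝ × (Matrix (Fin r) (Fin r) ℝ)ᵐᵒᵖ =>
      p.2.unop := MulOpposite.continuous_unop.comp continuous_snd
  exact (isClosed_eq (continuous_fst.mul hc) continuous_const).inter
    (isClosed_eq (hc.mul continuous_fst) continuous_const)

instance GLlc (r : ℕ) : LocallyCompactSpace (GL (Fin r) ℝ) :=
  (GLclosedEmbedding r).locallyCompactSpace

/-! ### Auxiliary linear algebra -/

section aux

variable {m : Type*} [Fintype m] [DecidableEq m]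

noncomputable def wInv (k : m) (w : m → ℝ) : m → ℝ :=
  fun j => if j = k then (w k)⁻¹ else -(w j) * (w k)⁻¹

theorem auxMul (k : m) (w : m → ℝ) (hw : w k ≠ 0) :
    updateCol (1 : Matrix m m ℝ) k w * updateCol 1 k (wInv k w) = 1 := by
  ext a b
  rw [Matrix.mul_apply]
  rcases eq_or_ne b k with rfl | hbk
  · rw [← Finset.add_sum_erase _ _ (Finset.mem_univ b)]
    have h1 : ∀ c ∈ Finset.univ.erase b,
        updateCol (1 : Matrix m m ℝ) b w a c *
          updateCol (1 : Matrix m m ℝ) b (wInv b w) c b =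
        (if a = c then wInv b w c else 0) := by
      intro c hc
      have hcb : c ≠ b := (Finset.mem_erase.mp hc).1
      rw [updateCol_apply, updateCol_apply, if_neg hcb, if_pos rfl, one_apply]
      split_ifs <;> ring
    rw [Finset.sum_congr rfl h1, Finset.sum_ite_eq]
    rw [updateCol_apply, updateCol_apply, if_pos rfl, if_pos rfl]
    rcases eq_or_ne a b with rfl | hab
    · simp [wInv, mul_inv_cancel₀ hw, one_apply]
    · have h2 : (if a ∈ Finset.univ.erase b then wInv b w a else 0) = -(w a) * (w b)⁻¹ := by
        simp [wInv, hab, if_neg hab]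
      rw [h2, one_apply, if_neg hab, wInv, if_pos rfl]
      ring
  · rw [Finset.sum_eq_single b]
    · simp [updateCol_apply, one_apply, if_neg hbk]
    · intro c _ hcb
      simp [updateCol_apply, one_apply, if_neg hbk, if_neg (show ¬ c = b from hcb)]
    · simp

/-- The invertible matrix which is the identity except for column `k`, which is `w`. -/
noncomputable def auxU (k : m) (w : m → ℝ) (hw : w k ≠ 0) : GL m ℝ :=
  ⟨updateCol (1 : Matrix m m ℝ) k w, updateCol 1 k (wInv k w),
    auxMul k w hw, mul_eq_one_comm.mp (auxMul k w hw)⟩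

theorem updateColumn_one_mulVec_single (k : m) (w : m → ℝ) {i : m} (hik : i ≠ k) :
    updateCol (1 : Matrix m m ℝ) k w *ᵥ Pi.single i (1 : ℝ) = Pi.single i 1 := by
  rw [Matrix.mulVec_single]
  ext j
  show updateCol (1 : Matrix m m ℝ) k w j i * 1 = _
  rw [updateCol_apply, if_neg hik, mul_one, one_apply, Pi.single_apply]

theorem updateColumn_one_mulVec_self (k : m) (w : m → ℝ) :
    updateCol (1 : Matrix m m ℝ) k w *ᵥ Pi.single k (1 : ℝ) = w := by
  rw [Matrix.mulVec_single]
  ext j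
  show updateCol (1 : Matrix m m ℝ) k w j k * 1 = _
  rw [updateCol_apply, if_pos rfl, mul_one]

theorem auxU_val (k : m) (w : m → ℝ) (hw : w k ≠ 0) :
    (auxU k w hw : Matrix m m ℝ) = updateCol 1 k w := rfl

theorem auxU_inv_val (k : m) (w : m → ℝ) (hw : w k ≠ 0) :
    ((auxU k w hw)⁻¹ : GL m ℝ) = (updateCol 1 k (wInv k w) : Matrix m m ℝ) := rfl

/-- Fixing a basis vector is preserved by products. -/
theorem fix_mul {u v : GL m ℝ} {i : m}
    (hu : (u : Matrix m m ℝ) *ᵥ Pi.single i (1 : ℝ) = Pi.single i 1)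
    (hv : (v : Matrix m m ℝ) *ᵥ Pi.single i (1 : ℝ) = Pi.single i 1) :
    ((u * v : GL m ℝ) : Matrix m m ℝ) *ᵥ Pi.single i (1 : ℝ) = Pi.single i 1 := by
  rw [Units.val_mul, ← Matrix.mulVec_mulVec, hv, hu]

theorem fix_inv {u : GL m ℝ} {i : m}
    (hu : (u : Matrix m m ℝ) *ᵥ Pi.single i (1 : ℝ) = Pi.single i 1) :
    ((u⁻¹ : GL m ℝ) : Matrix m m ℝ) *ᵥ Pi.single i (1 : ℝ) = Pi.single i 1 := by
  conv_lhs => rw [← hu]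
  rw [Matrix.mulVec_mulVec, Units.inv_mul, Matrix.one_mulVec]

/-- A unit fixing all basis vectors is 1. -/
theorem eq_one_of_fix {u : GL m ℝ}
    (h : ∀ i : m, (u : Matrix m m ℝ) *ᵥ Pi.single i (1 : ℝ) = Pi.single i 1) : u = 1 := by
  apply Units.ext
  ext a b
  have := congrFun (h b) a
  rw [Matrix.mulVec_single] at this
  simpa [Matrix.one_apply, Pi.single_apply] using this

theorem exists_unit_col (k : m) (v : m → ℝ) (hv : v ≠ 0) :
    ∃ B : GL m ℝ, (B : Matrix m m ℝ) *ᵥ Pi.single k (1 : ℝ) = v := by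
  obtain ⟨j, hj⟩ : ∃ j, v j ≠ 0 := Function.ne_iff.mp hv
  set τ := Equiv.swap k j with hτ
  have hinv : ∀ a b : m, a = τ b ↔ τ a = b := fun a b =>
    ⟨fun h => by rw [h, hτ, Equiv.swap_apply_self],
     fun h => by rw [← h, hτ, Equiv.swap_apply_self]⟩
  set P : Matrix m m ℝ := Matrix.of fun a b => if a = τ b then (1 : ℝ) else 0 with hP
  have hPapp : ∀ a b, P a b = if a = τ b then (1 : ℝ) else 0 := fun a b => rfl
  have hPmulVec : ∀ x : m → ℝ, P *ᵥ x = fun a => x (τ a) := by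
    intro x
    ext a
    show (∑ b, P a b * x b) = x (τ a)
    have h2 : ∀ b, P a b * x b = if τ a = b then x b else 0 := by
      intro b
      by_cases h : τ a = b
      · rw [hPapp, if_pos ((hinv a b).mpr h), if_pos h, one_mul]
      · rw [hPapp, if_neg (fun hh => h ((hinv a b).mp hh)), if_neg h, zero_mul]
    rw [Finset.sum_congr rfl fun b _ => h2 b, Finset.sum_ite_eq]
    simp
  have hPP : P * P = 1 := by
    ext a b
    rw [Matrix.mul_apply, Matrix.one_apply]
    have h2 : ∀ c, P a c * P c b =
        if τ a = c then (if c = τ b then (1 : ℝ) else 0) else 0 := by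
      intro c
      by_cases h : τ a = c
      · rw [hPapp, if_pos ((hinv a c).mpr h), if_pos h, one_mul, hPapp]
      · rw [hPapp, if_neg (fun hh => h ((hinv a c).mp hh)), if_neg h, zero_mul]
    rw [Finset.sum_congr rfl fun c _ => h2 c, Finset.sum_ite_eq]
    simp only [Finset.mem_univ, if_true]
    by_cases hab : a = b
    · subst hab; simp [hinv]
    · rw [if_neg, if_neg hab]
      intro hcontra
      exact hab
        (((hinv (τ a) b).mp hcontra).symm.trans (by rw [hτ, Equiv.swap_apply_self]) : b = a).symm
  set w : m → ℝ := fun a => v (τ a) with hw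
  have hwk : w k ≠ 0 := by simpa [hw, hτ, Equiv.swap_apply_left] using hj
  refine ⟨(⟨P, P, hPP, hPP⟩ : GL m ℝ) * auxU k w hwk, ?_⟩
  rw [Units.val_mul, ← Matrix.mulVec_mulVec]
  rw [auxU_val, updateColumn_one_mulVec_self, hPmulVec]
  ext a
  simp [hw, hτ, Equiv.swap_apply_self]

end aux

theorem adj_last {n : ℕ} (A : Matrix (Fin (n + 1)) (Fin (n + 1)) ℝ) :
    A.adjugate (Fin.last n) (Fin.last n) =
      (A.submatrix Fin.castSucc Fin.castSucc).det := by
  rw [Matrix.adjugate_apply, Matrix.det_succ_row _ (Fin.last n)]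
  rw [Finset.sum_eq_single (Fin.last n)]
  · rw [Matrix.updateRow_self]
    have h1 : (Pi.single (Fin.last n) (1 : ℝ) : Fin (n + 1) → ℝ) (Fin.last n) = 1 := by simp
    rw [h1, mul_one]
    have h2 : (-1 : ℝ) ^ ((Fin.last n : ℕ) + (Fin.last n : ℕ)) = 1 := by
      rw [Fin.val_last, ← two_mul, pow_mul]
      norm_num
    rw [h2, one_mul]
    congr 1
    ext i j
    rw [Fin.succAbove_last, Matrix.submatrix_apply, Matrix.submatrix_apply,
      Matrix.updateRow_ne (Fin.castSucc_lt_last i).ne]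
  · intro j _ hj
    rw [Matrix.updateRow_self, Pi.single_eq_of_ne hj, mul_zero, zero_mul]
  · simp

theorem part3_iff {n : ℕ} (A : GL (Fin (n + 1)) ℝ) :
    (((A⁻¹ : GL (Fin (n + 1)) ℝ) : Matrix (Fin (n + 1)) (Fin (n + 1)) ℝ) *ᵥ
        Pi.single (Fin.last n) (1 : ℝ)) (Fin.last n) ≠ 0 ↔
      IsUnit (((A : Matrix (Fin (n + 1)) (Fin (n + 1)) ℝ).submatrix
        Fin.castSucc Fin.castSucc).det) := by
  have hdet : ((A : Matrix (Fin (n + 1)) (Fin (n + 1)) ℝ)).det ≠ 0 := by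
    have : IsUnit ((A : Matrix (Fin (n + 1)) (Fin (n + 1)) ℝ)).det :=
      (Matrix.isUnit_iff_isUnit_det _).mp A.isUnit
    exact this.ne_zero
  rw [Matrix.mulVec_single]
  show ((A⁻¹ : GL (Fin (n + 1)) ℝ) : Matrix (Fin (n + 1)) (Fin (n + 1)) ℝ) (Fin.last n) (Fin.last n) * 1 ≠ 0 ↔ _
  rw [mul_one, Matrix.coe_units_inv, Matrix.inv_def, Matrix.smul_apply, adj_last,
    smul_eq_mul, Ring.inverse_eq_inv']
  rw [mul_ne_zero_iff, isUnit_iff_ne_zero]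
  exact ⟨fun h => h.2, fun h => ⟨inv_ne_zero hdet, h⟩⟩

/-! ### The main auxiliary theorem, stated with `r = n + 1`. -/

theorem stmt7_aux (n : ℕ) :
    Set.InjOn (fun p : GL (Fin (n + 1)) ℝ × GL (Fin (n + 1)) ℝ => p.1 * p.2)
      (({g : GL (Fin (n + 1)) ℝ | (g : Matrix (Fin (n + 1)) (Fin (n + 1)) ℝ) *ᵥ
          Pi.single (Fin.last n) (1 : ℝ) = Pi.single (Fin.last n) (1 : ℝ)}) ×ˢ
        ({h : GL (Fin (n + 1)) ℝ | ∀ i : Fin (n + 1), (i : ℕ) < n →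
          (h : Matrix (Fin (n + 1)) (Fin (n + 1)) ℝ) *ᵥ Pi.single i (1 : ℝ) =
            Pi.single i (1 : ℝ)})) ∧
    ((fun p : GL (Fin (n + 1)) ℝ × GL (Fin (n + 1)) ℝ => p.1 * p.2) ''
        (({g : GL (Fin (n + 1)) ℝ | (g : Matrix (Fin (n + 1)) (Fin (n + 1)) ℝ) *ᵥ
            Pi.single (Fin.last n) (1 : ℝ) = Pi.single (Fin.last n) (1 : ℝ)}) ×ˢ
          ({h : GL (Fin (n + 1)) ℝ | ∀ i : Fin (n + 1), (i : ℕ) < n →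
            (h : Matrix (Fin (n + 1)) (Fin (n + 1)) ℝ) *ᵥ Pi.single i (1 : ℝ) =
              Pi.single i (1 : ℝ)})) =
      {A : GL (Fin (n + 1)) ℝ |
        (((A⁻¹ : GL (Fin (n + 1)) ℝ) : Matrix (Fin (n + 1)) (Fin (n + 1)) ℝ) *ᵥ
            Pi.single (Fin.last n) (1 : ℝ)) (Fin.last n) ≠ 0}) ∧
    ({A : GL (Fin (n + 1)) ℝ |
        (((A⁻¹ : GL (Fin (n + 1)) ℝ) : Matrix (Fin (n + 1)) (Fin (n + 1)) ℝ) *ᵥ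
            Pi.single (Fin.last n) (1 : ℝ)) (Fin.last n) ≠ 0} =
      {A : GL (Fin (n + 1)) ℝ |
        IsUnit (((A : Matrix (Fin (n + 1)) (Fin (n + 1)) ℝ).submatrix
          Fin.castSucc Fin.castSucc).det)}) ∧
    IsOpen {A : GL (Fin (n + 1)) ℝ |
        (((A⁻¹ : GL (Fin (n + 1)) ℝ) : Matrix (Fin (n + 1)) (Fin (n + 1)) ℝ) *ᵥ
            Pi.single (Fin.last n) (1 : ℝ)) (Fin.last n) ≠ 0} ∧
    ∀ μ : Measure (GL (Fin (n + 1)) ℝ), μ.IsHaarMeasure →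
      μ {A : GL (Fin (n + 1)) ℝ |
          (((A⁻¹ : GL (Fin (n + 1)) ℝ) : Matrix (Fin (n + 1)) (Fin (n + 1)) ℝ) *ᵥ
              Pi.single (Fin.last n) (1 : ℝ)) (Fin.last n) ≠ 0}ᶜ = 0 := by
  set k : Fin (n + 1) := Fin.last n with hkdef
  refine ⟨?_, ?_, ?_, ?_, ?_⟩
  · -- injectivity
    rintro ⟨g₁, h₁⟩ ⟨hg₁, hh₁⟩ ⟨g₂, h₂⟩ ⟨hg₂, hh₂⟩ heq
    simp only [Set.mem_setOf_eq] at hg₁ hg₂ hh₁ hh₂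
    have heq' : g₁ * h₁ = g₂ * h₂ := heq
    have key : g₂⁻¹ * g₁ = h₂ * h₁⁻¹ := by
      calc g₂⁻¹ * g₁ = g₂⁻¹ * (g₁ * h₁) * h₁⁻¹ := by group
      _ = g₂⁻¹ * (g₂ * h₂) * h₁⁻¹ := by rw [heq']
      _ = h₂ * h₁⁻¹ := by group
    have hfix : ∀ i : Fin (n + 1),
        ((g₂⁻¹ * g₁ : GL (Fin (n + 1)) ℝ) : Matrix (Fin (n + 1)) (Fin (n + 1)) ℝ) *ᵥ Pi.single i (1 : ℝ) =
          Pi.single i 1 := by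
      intro i
      by_cases hi : (i : ℕ) < n
      · rw [key]
        exact fix_mul (hh₂ i hi) (fix_inv (hh₁ i hi))
      · have h2 := i.isLt
        have h3 : (i : ℕ) = n := by omega
        have : i = k := Fin.ext (by rw [h3, hkdef, Fin.val_last])
        subst this
        exact fix_mul (fix_inv hg₂) hg₁
    have h1 : g₂⁻¹ * g₁ = 1 := eq_one_of_fix hfix
    have hgg : g₂ = g₁ := inv_mul_eq_one.mp h1
    have hhh : h₂ * h₁⁻¹ = 1 := by rw [← key, h1]
    have hhh' : h₂ = h₁ := mul_inv_eq_one.mp hhh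
    exact Prod.ext hgg.symm hhh'.symm
  · -- image description
    ext A
    simp only [Set.mem_image, Set.mem_prod, Set.mem_setOf_eq]
    constructor
    · rintro ⟨⟨g, h⟩, ⟨hg, hh⟩, rfl⟩
      simp only [Set.mem_setOf_eq] at hg hh ⊢
      have hu : ((((g * h : GL (Fin (n + 1)) ℝ))⁻¹ : GL (Fin (n + 1)) ℝ) : Matrix (Fin (n + 1)) (Fin (n + 1)) ℝ) *ᵥ
          Pi.single k (1 : ℝ) =
          ((h⁻¹ : GL (Fin (n + 1)) ℝ) : Matrix (Fin (n + 1)) (Fin (n + 1)) ℝ) *ᵥ Pi.single k (1 : ℝ) := by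
        rw [_root_.mul_inv_rev, Units.val_mul, ← Matrix.mulVec_mulVec, fix_inv hg]
      rw [hu]
      intro h0
      have hrec : (h : Matrix (Fin (n + 1)) (Fin (n + 1)) ℝ) *ᵥ
          (((h⁻¹ : GL (Fin (n + 1)) ℝ) : Matrix (Fin (n + 1)) (Fin (n + 1)) ℝ) *ᵥ Pi.single k (1 : ℝ)) =
            Pi.single k (1 : ℝ) := by
        rw [Matrix.mulVec_mulVec, Units.mul_inv, Matrix.one_mulVec]
      set u : Fin (n + 1) → ℝ :=
        ((h⁻¹ : GL (Fin (n + 1)) ℝ) : Matrix (Fin (n + 1)) (Fin (n + 1)) ℝ) *ᵥ Pi.single k (1 : ℝ) with hudef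
      have hzero : ∀ i : Fin (n + 1),
          (h : Matrix (Fin (n + 1)) (Fin (n + 1)) ℝ) k i * u i = 0 := by
        intro i
        by_cases hik : i = k
        · subst hik
          rw [h0, mul_zero]
        · have hilt : (i : ℕ) < n := by
            have h2 := i.isLt
            have : (i : ℕ) ≠ n := fun hc => hik (Fin.ext (by simpa [hkdef] using hc))
            omega
          have h3 : (h : Matrix (Fin (n + 1)) (Fin (n + 1)) ℝ) k i = 0 := by
            have h3' := congrFun (hh i hilt) k
            rw [Matrix.mulVec_single] at h3'
            simpa [Pi.single_eq_of_ne (show k ≠ i from fun hc => hik hc.symm)] using h3'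
          rw [h3, zero_mul]
      have h1 : (∑ i, (h : Matrix (Fin (n + 1)) (Fin (n + 1)) ℝ) k i * u i) =
          (Pi.single k (1 : ℝ) : Fin (n + 1) → ℝ) k := congrFun hrec k
      rw [Finset.sum_eq_zero fun i _ => hzero i] at h1
      simp at h1
    · intro hA
      have hw : (((A⁻¹ : GL (Fin (n + 1)) ℝ) : Matrix (Fin (n + 1)) (Fin (n + 1)) ℝ) *ᵥ Pi.single k (1 : ℝ)) k ≠ 0 := hA
      set w : Fin (n + 1) → ℝ :=
        ((A⁻¹ : GL (Fin (n + 1)) ℝ) : Matrix (Fin (n + 1)) (Fin (n + 1)) ℝ) *ᵥ Pi.single k (1 : ℝ) with hwdef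
      refine ⟨(A * auxU k w hw, (auxU k w hw)⁻¹), ⟨?_, ?_⟩, ?_⟩
      · show ((A * auxU k w hw : GL (Fin (n + 1)) ℝ) : Matrix (Fin (n + 1)) (Fin (n + 1)) ℝ) *ᵥ Pi.single k (1 : ℝ) =
          Pi.single k (1 : ℝ)
        rw [Units.val_mul, ← Matrix.mulVec_mulVec, auxU_val, updateColumn_one_mulVec_self,
          hwdef, Matrix.mulVec_mulVec, Units.mul_inv, Matrix.one_mulVec]
      · intro i hi
        show (((auxU k w hw)⁻¹ : GL (Fin (n + 1)) ℝ) : Matrix (Fin (n + 1)) (Fin (n + 1)) ℝ) *ᵥ Pi.single i (1 : ℝ) =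
          Pi.single i (1 : ℝ)
        rw [auxU_inv_val]
        refine updateColumn_one_mulVec_single k _ fun hc => ?_
        rw [hc, hkdef] at hi
        simp at hi
      · show A * auxU k w hw * (auxU k w hw)⁻¹ = A
        rw [mul_inv_cancel_right]
  · -- equivalence with the minor condition
    ext A
    exact part3_iff A
  · -- openness
    have hset : {A : GL (Fin (n + 1)) ℝ |
        (((A⁻¹ : GL (Fin (n + 1)) ℝ) : Matrix (Fin (n + 1)) (Fin (n + 1)) ℝ) *ᵥ
            Pi.single k (1 : ℝ)) k ≠ 0} =
        (fun A : GL (Fin (n + 1)) ℝ =>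
          ((A⁻¹ : GL (Fin (n + 1)) ℝ) : Matrix (Fin (n + 1)) (Fin (n + 1)) ℝ) k k) ⁻¹'
          {x : ℝ | x ≠ 0} := by
      ext A
      simp [Matrix.mulVec_single]
    rw [hset]
    exact (isOpen_ne).preimage ((Units.continuous_val.comp continuous_inv).matrix_elem k k)
  · -- null complement for Haar measures
    intro μ hμ
    haveI := hμ
    haveI : SigmaFinite μ := by infer_instance
    set Z : Set (GL (Fin (n + 1)) ℝ) := {A : GL (Fin (n + 1)) ℝ |
        (((A⁻¹ : GL (Fin (n + 1)) ℝ) : Matrix (Fin (n + 1)) (Fin (n + 1)) ℝ) *ᵥ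
            Pi.single k (1 : ℝ)) k ≠ 0}ᶜ with hZdef
    have hZeq : Z = {A : GL (Fin (n + 1)) ℝ |
        (((A⁻¹ : GL (Fin (n + 1)) ℝ) : Matrix (Fin (n + 1)) (Fin (n + 1)) ℝ) *ᵥ
            Pi.single k (1 : ℝ)) k = 0} := by
      ext A
      simp [hZdef]
    set F : (Fin (n + 1) → ℝ) × GL (Fin (n + 1)) ℝ → ℝ := fun p =>
      (((p.2⁻¹ : GL (Fin (n + 1)) ℝ) : Matrix (Fin (n + 1)) (Fin (n + 1)) ℝ) *ᵥ p.1) k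
      with hFdef
    have hFsum : ∀ p : (Fin (n + 1) → ℝ) × GL (Fin (n + 1)) ℝ,
        F p = ∑ i, ((p.2⁻¹ : GL (Fin (n + 1)) ℝ) : Matrix (Fin (n + 1)) (Fin (n + 1)) ℝ) k i *
          p.1 i := fun p => rfl
    have hF : Continuous F := by
      have : Continuous fun p : (Fin (n + 1) → ℝ) × GL (Fin (n + 1)) ℝ =>
          ∑ i, ((p.2⁻¹ : GL (Fin (n + 1)) ℝ) : Matrix (Fin (n + 1)) (Fin (n + 1)) ℝ) k i *
            p.1 i := by
        refine continuous_finset_sum _ fun i _ => Continuous.mul ?_ ?_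
        · exact ((Units.continuous_val.comp continuous_inv).matrix_elem k i).comp continuous_snd
        · exact (continuous_apply i).comp continuous_fst
      simpa [funext hFsum] using this
    have hW : MeasurableSet (F ⁻¹' {0}) := (isClosed_singleton.preimage hF).measurableSet
    have hslice : ∀ A : GL (Fin (n + 1)) ℝ,
        volume ((fun v : Fin (n + 1) → ℝ => (v, A)) ⁻¹' (F ⁻¹' {0})) = 0 := by
      intro A
      set φ : (Fin (n + 1) → ℝ) →ₗ[ℝ] ℝ :=
        (LinearMap.proj k).comp
          (Matrix.mulVecLin ((A⁻¹ : GL (Fin (n + 1)) ℝ) : Matrix (Fin (n + 1)) (Fin (n + 1)) ℝ))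
        with hφdef
      have hsets : ((fun v : Fin (n + 1) → ℝ => (v, A)) ⁻¹' (F ⁻¹' {0})) =
          (LinearMap.ker φ : Submodule ℝ (Fin (n + 1) → ℝ)) := by
        ext v
        simp [hφdef, hFdef, LinearMap.mem_ker]
      rw [hsets]
      refine Measure.addHaar_submodule volume _ fun hc => ?_
      have hφ1 : φ ((A : Matrix (Fin (n + 1)) (Fin (n + 1)) ℝ) *ᵥ Pi.single k (1 : ℝ)) = 1 := by
        simp only [hφdef, LinearMap.comp_apply, Matrix.mulVecLin_apply, LinearMap.proj_apply]
        rw [Matrix.mulVec_mulVec, Units.inv_mul, Matrix.one_mulVec]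
        simp
      have : φ = 0 := LinearMap.ker_eq_top.mp hc
      rw [this] at hφ1
      simp at hφ1
    have hprod : (volume.prod μ) (F ⁻¹' {0}) = 0 := by
      rw [Measure.prod_apply_symm hW]
      rw [lintegral_congr fun A => hslice A]
      exact lintegral_zero
    have h2 : (∫⁻ v : Fin (n + 1) → ℝ, μ (Prod.mk v ⁻¹' (F ⁻¹' {0})) ∂volume) = 0 := by
      rw [← Measure.prod_apply hW]
      exact hprod
    have hinvar : ∀ v : Fin (n + 1) → ℝ, v ≠ 0 → μ (Prod.mk v ⁻¹' (F ⁻¹' {0})) = μ Z := by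
      intro v hv
      obtain ⟨B, hB⟩ := exists_unit_col k v hv
      have hsets : (Prod.mk v ⁻¹' (F ⁻¹' {0})) = (fun A => B⁻¹ * A) ⁻¹' Z := by
        ext A
        simp only [Set.mem_preimage, Set.mem_singleton_iff, hZeq, Set.mem_setOf_eq, hFdef]
        have : (((B⁻¹ * A : GL (Fin (n + 1)) ℝ)⁻¹ : GL (Fin (n + 1)) ℝ) : Matrix (Fin (n + 1)) (Fin (n + 1)) ℝ) *ᵥ
            Pi.single k (1 : ℝ) =
            ((A⁻¹ : GL (Fin (n + 1)) ℝ) : Matrix (Fin (n + 1)) (Fin (n + 1)) ℝ) *ᵥ v := by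
          rw [_root_.mul_inv_rev, inv_inv, Units.val_mul, ← Matrix.mulVec_mulVec, hB]
        rw [this]
      rw [hsets]
      exact measure_preimage_mul μ B⁻¹ Z
    by_contra hZne
    have hcne : μ Z ≠ 0 := by
      intro hc
      exact hZne hc
    have hbound : ∀ v : Fin (n + 1) → ℝ,
        ({(0 : Fin (n + 1) → ℝ)}ᶜ : Set (Fin (n + 1) → ℝ)).indicator (fun _ => μ Z) v ≤
          μ (Prod.mk v ⁻¹' (F ⁻¹' {0})) := by
      intro v
      by_cases hv : v = 0
      · subst hv
        simp [Set.indicator_apply]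
      · rw [Set.indicator_of_mem (by simpa using hv)]
        exact le_of_eq (hinvar v hv).symm
    have hle := lintegral_mono (μ := (volume : Measure (Fin (n + 1) → ℝ))) hbound
    rw [h2] at hle
    rw [lintegral_indicator (measurableSet_singleton (0 : Fin (n + 1) → ℝ)).compl,
      setLIntegral_const] at hle
    have hvol : volume ({(0 : Fin (n + 1) → ℝ)}ᶜ : Set (Fin (n + 1) → ℝ)) = ⊤ := by
      have huniv : volume (Set.univ : Set (Fin (n + 1) → ℝ)) = ⊤ := by
        rw [MeasureTheory.volume_pi, Measure.pi_univ]
        simp [Real.volume_univ]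
      have hsub := measure_union_le (μ := (volume : Measure (Fin (n + 1) → ℝ)))
        ({(0 : Fin (n + 1) → ℝ)} : Set (Fin (n + 1) → ℝ)) ({(0 : Fin (n + 1) → ℝ)}ᶜ)
      rw [Set.union_compl_self, huniv, measure_singleton, zero_add] at hsub
      exact top_le_iff.mp hsub
    rw [hvol, ENNReal.mul_top hcne] at hle
    exact (by simp : ¬ (⊤ : ENNReal) ≤ 0) hle

/-- For `r ≥ 1`, let `P₁ ⊆ GL_r(ℝ)` be the stabilizer of the last standard basis
vector `e_r` and `P₂ ⊆ GL_r(ℝ)` the pointwise stabilizer of `e_1, …, e_{r-1}`.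
Then multiplication `P₁ × P₂ → GL_r(ℝ)` is injective, its image is exactly the set
of `A` such that the last coordinate of `A⁻¹ e_r` is nonzero (equivalently, the
top-left `(r-1) × (r-1)` minor of `A` is invertible); this image is open, and its
complement is null for every Haar measure on `GL_r(ℝ)`. -/
theorem stmt7 (r : ℕ) (hr : 1 ≤ r) :
    Set.InjOn (fun p : GL (Fin r) ℝ × GL (Fin r) ℝ => p.1 * p.2)
      (({g : GL (Fin r) ℝ | (g : Matrix (Fin r) (Fin r) ℝ) *ᵥ
          Pi.single (⟨r - 1, by omega⟩ : Fin r) (1 : ℝ) =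
            Pi.single (⟨r - 1, by omega⟩ : Fin r) (1 : ℝ)}) ×ˢ
        ({h : GL (Fin r) ℝ | ∀ i : Fin r, (i : ℕ) < r - 1 →
          (h : Matrix (Fin r) (Fin r) ℝ) *ᵥ Pi.single i (1 : ℝ) =
            Pi.single i (1 : ℝ)})) ∧
    ((fun p : GL (Fin r) ℝ × GL (Fin r) ℝ => p.1 * p.2) ''
        (({g : GL (Fin r) ℝ | (g : Matrix (Fin r) (Fin r) ℝ) *ᵥ
            Pi.single (⟨r - 1, by omega⟩ : Fin r) (1 : ℝ) =
              Pi.single (⟨r - 1, by omega⟩ : Fin r) (1 : ℝ)}) ×ˢ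
          ({h : GL (Fin r) ℝ | ∀ i : Fin r, (i : ℕ) < r - 1 →
            (h : Matrix (Fin r) (Fin r) ℝ) *ᵥ Pi.single i (1 : ℝ) =
              Pi.single i (1 : ℝ)})) =
      {A : GL (Fin r) ℝ |
        (((A⁻¹ : GL (Fin r) ℝ) : Matrix (Fin r) (Fin r) ℝ) *ᵥ
            Pi.single (⟨r - 1, by omega⟩ : Fin r) (1 : ℝ))
          ⟨r - 1, by omega⟩ ≠ 0}) ∧
    ({A : GL (Fin r) ℝ |
        (((A⁻¹ : GL (Fin r) ℝ) : Matrix (Fin r) (Fin r) ℝ) *ᵥ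
            Pi.single (⟨r - 1, by omega⟩ : Fin r) (1 : ℝ))
          ⟨r - 1, by omega⟩ ≠ 0} =
      {A : GL (Fin r) ℝ |
        IsUnit (((A : Matrix (Fin r) (Fin r) ℝ).submatrix
          (Fin.castLE (by omega : r - 1 ≤ r))
          (Fin.castLE (by omega : r - 1 ≤ r))).det)}) ∧
    IsOpen {A : GL (Fin r) ℝ |
        (((A⁻¹ : GL (Fin r) ℝ) : Matrix (Fin r) (Fin r) ℝ) *ᵥ
            Pi.single (⟨r - 1, by omega⟩ : Fin r) (1 : ℝ))
          ⟨r - 1, by omega⟩ ≠ 0} ∧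
    ∀ μ : Measure (GL (Fin r) ℝ), μ.IsHaarMeasure →
      μ {A : GL (Fin r) ℝ |
          (((A⁻¹ : GL (Fin r) ℝ) : Matrix (Fin r) (Fin r) ℝ) *ᵥ
              Pi.single (⟨r - 1, by omega⟩ : Fin r) (1 : ℝ))
            ⟨r - 1, by omega⟩ ≠ 0}ᶜ = 0 := by
  obtain ⟨n, rfl⟩ : ∃ n, r = n + 1 := ⟨r - 1, (Nat.succ_pred_eq_of_pos hr).symm⟩
  exact stmt7_aux n
end
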